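/- arXiv:2302.02280 — 7 statements merged into one kernel-verified Lean document; each statement's English description precedes it below -/
import Mathlib

section
/- For any differentiable curve (x,y) : [0,∞) → ℝ² satisfying x'(t) = f₁(x(t),y(t)) and y'(t) = f₂(x(t),y(t)) for all t ≥ 0, with initial condition (x(0),y(0)) ∈ Ω, the curve remains in Ω for all t ≥ 0, i.e., x(t) ≥ 0, y(t) ≥ 0 and x(t)+y(t) ≤ 1 for every t ≥ 0. -/
open MeasureTheory intervalIntegral Real

lemma ode_nonneg (a c u : ℝ → ℝ) (ha : Continuous a) (hc0 : ∀ t, 0 ≤ c t)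
    (hu : ∀ t : ℝ, 0 ≤ t → HasDerivAt u (a t * u t + c t) t) (hu0 : 0 ≤ u 0) :
    ∀ t : ℝ, 0 ≤ t → 0 ≤ u t := by
  set A : ℝ → ℝ := fun t => ∫ s in (0:ℝ)..t, a s with hA
  have hAderiv : ∀ t : ℝ, HasDerivAt A (a t) t := fun t =>
    integral_hasDerivAt_right (ha.intervalIntegrable _ _)
      (ha.stronglyMeasurableAtFilter _ _) ha.continuousAt
  set ψ : ℝ → ℝ := fun t => u t * Real.exp (-(A t)) with hψ
  have hψd : ∀ t : ℝ, 0 ≤ t →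
      HasDerivAt ψ (c t * Real.exp (-(A t))) t := by
    intro t ht
    have h1 := (hu t ht).mul (((hAderiv t).neg).exp)
    refine h1.congr_deriv ?_
    simp only [Pi.neg_apply]; ring
  have hmono : MonotoneOn ψ (Set.Ici (0:ℝ)) := by
    apply monotoneOn_of_deriv_nonneg (convex_Ici 0)
    · exact fun t ht => ((hψd t ht).continuousAt.continuousWithinAt)
    · intro t ht
      rw [interior_Ici] at ht
      exact (hψd t (le_of_lt ht)).differentiableAt.differentiableWithinAt
    · intro t ht
      rw [interior_Ici] at ht
      rw [(hψd t (le_of_lt ht)).deriv]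
      exact mul_nonneg (hc0 t) (Real.exp_pos _).le
  intro t ht
  have h0 : ψ 0 ≤ ψ t := hmono (Set.self_mem_Ici) ht ht
  have hψ0 : 0 ≤ ψ 0 := by positivity
  have : 0 ≤ u t * Real.exp (-(A t)) := le_trans hψ0 h0
  nlinarith [Real.exp_pos (-(A t))]

/-- Ω = {(x,y) : 0 ≤ x, 0 ≤ y, x+y ≤ 1} is a trapping region for the
dimensionless AMR model: any differentiable curve solving the system with initial
condition in Ω remains in Ω for all t ≥ 0. -/
theorem trapping_region
    (βs βr α γ q h₁ h₂ : ℝ)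
    (hβs : 0 < βs) (hβr : 0 < βr) (hββ : βr ≤ βs)
    (hα : 0 < α) (hγ : 0 < γ) (hq : 0 < q)
    (hh₁ : h₁ ∈ Set.Icc (0 : ℝ) 1) (hh₂ : h₂ ∈ Set.Icc (0 : ℝ) 1)
    (f₁ f₂ : ℝ → ℝ → ℝ)
    (hf₁ : ∀ x y : ℝ, f₁ x y =
      βs * x * (1 - (x + y)) - (α + γ) * x - (1 - h₁) * q * x - (1 - h₂) * x * y)
    (hf₂ : ∀ x y : ℝ, f₂ x y =
      βr * y * (1 - (x + y)) + (1 - h₁) * q * x + (1 - h₂) * x * y - γ * y)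
    (x y : ℝ → ℝ)
    (hx' : ∀ t : ℝ, 0 ≤ t → HasDerivAt x (f₁ (x t) (y t)) t)
    (hy' : ∀ t : ℝ, 0 ≤ t → HasDerivAt y (f₂ (x t) (y t)) t)
    (hx0 : 0 ≤ x 0) (hy0 : 0 ≤ y 0) (hxy0 : x 0 + y 0 ≤ 1) :
    ∀ t : ℝ, 0 ≤ t → 0 ≤ x t ∧ 0 ≤ y t ∧ x t + y t ≤ 1 := by
  -- clipped versions of x and y, globally continuous
  set X : ℝ → ℝ := fun t => x (max t 0) with hX
  set Y : ℝ → ℝ := fun t => y (max t 0) with hY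
  have hm : Continuous (fun s : ℝ => max s 0) := continuous_id.max continuous_const
  have hXc : Continuous X := by
    apply continuous_iff_continuousAt.mpr
    intro t
    show ContinuousAt (x ∘ fun s : ℝ => max s 0) t
    exact ContinuousAt.comp (f := fun s : ℝ => max s 0) (x := t)
      ((hx' _ (le_max_right t 0)).continuousAt) hm.continuousAt
  have hYc : Continuous Y := by
    apply continuous_iff_continuousAt.mpr
    intro t
    show ContinuousAt (y ∘ fun s : ℝ => max s 0) t
    exact ContinuousAt.comp (f := fun s : ℝ => max s 0) (x := t)
      ((hy' _ (le_max_right t 0)).continuousAt) hm.continuousAt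
  have hXeq : ∀ t : ℝ, 0 ≤ t → X t = x t := fun t ht => by
    simp [hX, max_eq_left ht]
  have hYeq : ∀ t : ℝ, 0 ≤ t → Y t = y t := fun t ht => by
    simp [hY, max_eq_left ht]
  -- Step 1 : x ≥ 0
  have hxpos : ∀ t : ℝ, 0 ≤ t → 0 ≤ x t := by
    apply ode_nonneg (fun t => βs * (1 - (X t + Y t)) - (α + γ) - (1 - h₁) * q
        - (1 - h₂) * Y t) (fun _ => 0) x
    · fun_prop
    · intro t; exact le_refl 0
    · intro t ht
      have h := hx' t ht
      rw [hf₁] at h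
      convert h using 1
      rw [hXeq t ht, hYeq t ht]; ring
    · exact hx0
  -- Step 2 : y ≥ 0
  have hXpos : ∀ t : ℝ, 0 ≤ X t := fun t => hxpos _ (le_max_right _ _)
  have hypos : ∀ t : ℝ, 0 ≤ t → 0 ≤ y t := by
    apply ode_nonneg (fun t => βr * (1 - (X t + Y t)) - γ + (1 - h₂) * X t)
      (fun t => (1 - h₁) * q * X t) y
    · fun_prop
    · intro t
      have h1 : (0:ℝ) ≤ 1 - h₁ := by linarith [hh₁.2]
      exact mul_nonneg (mul_nonneg h1 hq.le) (hXpos t)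
    · intro t ht
      have h := hy' t ht
      rw [hf₂] at h
      convert h using 1
      rw [hXeq t ht, hYeq t ht]; ring
    · exact hy0
  have hYpos : ∀ t : ℝ, 0 ≤ Y t := fun t => hypos _ (le_max_right _ _)
  -- Step 3 : x + y ≤ 1
  have hw : ∀ t : ℝ, 0 ≤ t → 0 ≤ 1 - (x t + y t) := by
    apply ode_nonneg (fun t => -(βs * X t + βr * Y t))
      (fun t => (α + γ) * X t + γ * Y t) (fun t => 1 - (x t + y t))
    · fun_prop
    · intro t
      have := hXpos t; have := hYpos t
      positivity
    · intro t ht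
      have h := ((hx' t ht).add (hy' t ht)).const_sub 1
      rw [hf₁, hf₂] at h
      refine h.congr_deriv ?_
      rw [hXeq t ht, hYeq t ht]; ring
    · linarith
  intro t ht
  exact ⟨hxpos t ht, hypos t ht, by linarith [hw t ht]⟩
end

section
/- If (x,y) ∈ Ω is an equilibrium (f₁(x,y) = 0 and f₂(x,y) = 0) with x > 0, then R_s·(1-(x+y)) = 1 + h_s·y, and consequently R_s > 1. In other words, R_s > 1 is a necessary condition for the existence of an equilibrium with a positive population of sensitive bacteria. -/
/-- At an equilibrium in Ω with x > 0 one has R_s·(1-(x+y)) = 1 + h_s·y,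
and hence R_s > 1 is necessary for the existence of an equilibrium with a positive
population of sensitive bacteria. -/
theorem Rs_gt_one_necessary
    (βs βr α γ q h₁ h₂ : ℝ)
    (hβs : 0 < βs) (hβr : 0 < βr)
    (hα : 0 < α) (hγ : 0 < γ) (hq : 0 < q)
    (hh₁ : h₁ ∈ Set.Icc (0 : ℝ) 1) (hh₂ : h₂ ∈ Set.Icc (0 : ℝ) 1)
    (f₁ f₂ : ℝ → ℝ → ℝ)
    (hf₁ : ∀ x y : ℝ, f₁ x y =
      βs * x * (1 - (x + y)) - (α + γ) * x - (1 - h₁) * q * x - (1 - h₂) * x * y)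
    (hf₂ : ∀ x y : ℝ, f₂ x y =
      βr * y * (1 - (x + y)) + (1 - h₁) * q * x + (1 - h₂) * x * y - γ * y)
    (Rs hs : ℝ)
    (hRs : Rs = βs / (α + γ + q * (1 - h₁)))
    (hhs : hs = (1 - h₂) / (α + γ + q * (1 - h₁)))
    (x y : ℝ)
    (hΩ : 0 ≤ x ∧ 0 ≤ y ∧ x + y ≤ 1)
    (hxpos : 0 < x)
    (heq₁ : f₁ x y = 0) (heq₂ : f₂ x y = 0) :
    Rs * (1 - (x + y)) = 1 + hs * y ∧ Rs > 1 := by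
  obtain ⟨hx0, hy0, hxy⟩ := hΩ
  obtain ⟨hh₁0, hh₁1⟩ := hh₁
  obtain ⟨hh₂0, hh₂1⟩ := hh₂
  have hD : 0 < α + γ + q * (1 - h₁) := by nlinarith
  rw [hf₁] at heq₁
  -- cancel x
  have key : βs * (1 - (x + y)) = (α + γ + q * (1 - h₁)) + (1 - h₂) * y := by
    have := heq₁
    have hx := hxpos.ne'
    field_simp at this ⊢
    nlinarith [this]
  have hDne := hD.ne'
  have hmain : Rs * (1 - (x + y)) = 1 + hs * y := by
    rw [hRs, hhs]
    field_simp
    linarith [key]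
  refine ⟨hmain, ?_⟩
  have hhs0 : 0 ≤ hs := by
    rw [hhs]; exact div_nonneg (by linarith) hD.le
  have hRs0 : 0 < Rs := by rw [hRs]; exact div_pos hβs hD
  have h1 : 1 ≤ Rs * (1 - (x + y)) := by
    rw [hmain]; nlinarith
  have h2 : 1 - (x + y) < 1 := by linarith
  nlinarith
end

section
/- Suppose h₂ < 1 and let y ∈ ℝ with x := (R_s - 1)/R_s - ((R_s + h_s)/R_s)·y. Then f₂(x,y) = 0 if and only if p(y) = 0, where p(y) = -a₂·y² + a₁·y + a₀ with a₂ = h_{r2}·(R_s + h_s) - h_s·R_r, a₁ = h_{r2}·(R_s - 1) - h_{r1}·q·(R_s + h_s) + R_r - R_s, a₀ = h_{r1}·q·(R_s - 1). -/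
/-- With h₂ < 1 and x := (R_s-1)/R_s - ((R_s+h_s)/R_s)·y, one has
f₂(x,y) = 0 iff p(y) = -a₂·y² + a₁·y + a₀ = 0, with the coefficients a₀, a₁, a₂
given by the thresholds. -/
theorem reduced_quadratic
    (βs βr α γ q h₁ h₂ : ℝ)
    (hβs : 0 < βs) (hβr : 0 < βr)
    (hα : 0 < α) (hγ : 0 < γ) (hq : 0 < q)
    (hh₁ : h₁ ∈ Set.Icc (0 : ℝ) 1) (hh₂ : h₂ ∈ Set.Icc (0 : ℝ) 1)
    (hh₂lt : h₂ < 1)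
    (f₂ : ℝ → ℝ → ℝ)
    (hf₂ : ∀ x y : ℝ, f₂ x y =
      βr * y * (1 - (x + y)) + (1 - h₁) * q * x + (1 - h₂) * x * y - γ * y)
    (Rr Rs hs hr1 hr2 a₂ a₁ a₀ : ℝ)
    (hRr : Rr = βr / γ)
    (hRs : Rs = βs / (α + γ + q * (1 - h₁)))
    (hhs : hs = (1 - h₂) / (α + γ + q * (1 - h₁)))
    (hhr1 : hr1 = (1 - h₁) / γ)
    (hhr2 : hr2 = (1 - h₂) / γ)
    (ha₂ : a₂ = hr2 * (Rs + hs) - hs * Rr)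
    (ha₁ : a₁ = hr2 * (Rs - 1) - hr1 * q * (Rs + hs) + Rr - Rs)
    (ha₀ : a₀ = hr1 * q * (Rs - 1))
    (y x : ℝ) (hx : x = (Rs - 1) / Rs - ((Rs + hs) / Rs) * y) :
    f₂ x y = 0 ↔ -a₂ * y ^ 2 + a₁ * y + a₀ = 0 := by
  have hD : 0 < α + γ + q * (1 - h₁) := by
    have h1le : h₁ ≤ 1 := hh₁.2
    nlinarith
  have hDne : (α + γ + q * (1 - h₁)) ≠ 0 := ne_of_gt hD
  have hγne : γ ≠ 0 := ne_of_gt hγ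
  have hβsne : βs ≠ 0 := ne_of_gt hβs
  have hRsne : Rs ≠ 0 := by
    rw [hRs]; positivity
  have key : f₂ x y = (γ * (α + γ + q * (1 - h₁)) / βs) * (-a₂ * y ^ 2 + a₁ * y + a₀) := by
    rw [hf₂, hx, ha₂, ha₁, ha₀, hRr, hhs, hhr1, hhr2]
    rw [hRs] at hRsne ⊢
    field_simp
    ring
  rw [key]
  constructor
  · intro h
    rcases mul_eq_zero.mp h with h' | h'
    · exact absurd h' (by positivity)
    · exact h'
  · intro h; rw [h, mul_zero]
end

section
/- Let p(y) = -a₂·y² + a₁·y + a₀ with a₂ = h_{r2}·(R_s + h_s) - h_s·R_r, a₁ = h_{r2}·(R_s - 1) - h_{r1}·q·(R_s + h_s) + R_r - R_s, a₀ = h_{r1}·q·(R_s - 1), and let y_max = (R_s - 1)/(R_s + h_s). Then p(y_max) = ((R_s - 1)/(h_s + R_s)²)·(h_s·R_r·R_s - R_s·h_s + R_r·R_s - R_s²). Consequently, if R_s > 1, R_s > 0, h_s > 0 and R_r·(h_s + 1) < h_s + R_s, then p(y_max) < 0. -/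
/-- Value of the quadratic p at y_max = (R_s-1)/(R_s+h_s), and its
negativity under R_s > 1, R_s > 0, h_s > 0 and R_r(h_s+1) < h_s + R_s. -/
theorem p_at_ymax
    (Rs Rr hs hr1 hr2 q : ℝ) (hne : hs + Rs ≠ 0)
    (a₂ a₁ a₀ ymax : ℝ)
    (ha₂ : a₂ = hr2 * (Rs + hs) - hs * Rr)
    (ha₁ : a₁ = hr2 * (Rs - 1) - hr1 * q * (Rs + hs) + Rr - Rs)
    (ha₀ : a₀ = hr1 * q * (Rs - 1))
    (hymax : ymax = (Rs - 1) / (Rs + hs))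
    (p : ℝ → ℝ) (hp : ∀ y : ℝ, p y = -a₂ * y ^ 2 + a₁ * y + a₀) :
    p ymax = ((Rs - 1) / (hs + Rs) ^ 2) *
      (hs * Rr * Rs - Rs * hs + Rr * Rs - Rs ^ 2) ∧
    (1 < Rs → 0 < Rs → 0 < hs → Rr * (hs + 1) < hs + Rs → p ymax < 0) := by
  have hne' : Rs + hs ≠ 0 := by rwa [add_comm] at hne
  have hval : p ymax = ((Rs - 1) / (hs + Rs) ^ 2) *
      (hs * Rr * Rs - Rs * hs + Rr * Rs - Rs ^ 2) := by
    rw [hp, hymax, ha₂, ha₁, ha₀]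
    field_simp
    ring
  refine ⟨hval, fun h1 h2 h3 h4 => ?_⟩
  rw [hval]
  have hpos : 0 < (Rs - 1) / (hs + Rs) ^ 2 := by
    apply div_pos (by linarith)
    positivity
  have hneg : hs * Rr * Rs - Rs * hs + Rr * Rs - Rs ^ 2 < 0 := by
    have : hs * Rr * Rs - Rs * hs + Rr * Rs - Rs ^ 2
        = Rs * (Rr * (hs + 1) - (hs + Rs)) := by ring
    rw [this]
    exact mul_neg_of_pos_of_neg h2 (by linarith)
  exact mul_neg_of_pos_of_neg hpos hneg
end

section
/- Assume β_s > β_r, 0 < h₁ < 1, 0 < h₂ < 1, R_s > 1 and R_r·(h_s + 1) < h_s + R_s. Define a₂ = h_{r2}·(R_s + h_s) - h_s·R_r, a₁ = h_{r2}·(R_s - 1) - h_{r1}·q·(R_s + h_s) + R_r - R_s, a₀ = h_{r1}·q·(R_s - 1), y* = (a₁ + √(a₁² + 4·a₂·a₀))/(2·a₂), and x* = (R_s - 1)/R_s - ((R_s + h_s)/R_s)·y*. Then x* > 0, y* > 0, x* + y* < 1, and (x*, y*) is an equilibrium of the system: f₁(x*,y*) = 0 and f₂(x*,y*) = 0. 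-/
/-- Auxiliary: bounds on the positive root of a quadratic. -/
lemma quad_root_bounds (a₂ a₁ a₀ R H y s : ℝ) (h2 : 0 < a₂) (h0 : 0 < a₀)
    (hs2 : s ^ 2 = a₁ ^ 2 + 4 * a₂ * a₀) (hsnn : 0 ≤ s)
    (hy : y * (2 * a₂) = a₁ + s)
    (hR : 0 < R) (hH : 0 < H)
    (hP : 0 < a₂ * R ^ 2 - a₁ * R * H - a₀ * H ^ 2) :
    0 < y ∧ H * y < R := by
  have hya : 0 < a₁ + s := by
    have h6 : -a₁ < s := by
      refine lt_of_pow_lt_pow_left₀ 2 hsnn ?_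
      rw [hs2]; nlinarith [mul_pos h2 h0]
    linarith
  have hypos : 0 < y := by nlinarith [hy]
  have hK : 0 < 2 * a₂ * R - H * a₁ := by
    nlinarith [mul_nonneg h0.le (sq_nonneg H), mul_pos h2 (mul_pos hR hR)]
  have hsq : (H * s) ^ 2 < (2 * a₂ * R - H * a₁) ^ 2 := by
    have hss : (H * s) ^ 2 = H ^ 2 * (a₁ ^ 2 + 4 * a₂ * a₀) := by
      rw [mul_pow, hs2]
    nlinarith [mul_pos h2 hP]
  have hsmall : H * s < 2 * a₂ * R - H * a₁ := by
    nlinarith [mul_nonneg hH.le hsnn, hK, hsq]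
  have h3 : H * (a₁ + s) < 2 * a₂ * R := by nlinarith [hsmall]
  have h4 : H * y * (2 * a₂) < 2 * a₂ * R := by
    calc H * y * (2 * a₂) = H * (y * (2 * a₂)) := by ring
      _ = H * (a₁ + s) := by rw [hy]
      _ < 2 * a₂ * R := h3
  exact ⟨hypos, by nlinarith [h4, h2]⟩

set_option maxHeartbeats 1600000 in
/-- Under β_s > β_r, 0 < h₁ < 1, 0 < h₂ < 1, R_s > 1 and
R_r(h_s+1) < h_s + R_s, the point (x*,y*) built from the positive root of the
quadratic is a coexistence equilibrium lying in the interior of Ω. -/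
theorem coexistence_equilibrium
    (βs βr α γ q h₁ h₂ : ℝ)
    (hβs : 0 < βs) (hβr : 0 < βr) (hββ : βr < βs)
    (hα : 0 < α) (hγ : 0 < γ) (hq : 0 < q)
    (hh₁ : 0 < h₁ ∧ h₁ < 1) (hh₂ : 0 < h₂ ∧ h₂ < 1)
    (f₁ f₂ : ℝ → ℝ → ℝ)
    (hf₁ : ∀ x y : ℝ, f₁ x y =
      βs * x * (1 - (x + y)) - (α + γ) * x - (1 - h₁) * q * x - (1 - h₂) * x * y)
    (hf₂ : ∀ x y : ℝ, f₂ x y =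
      βr * y * (1 - (x + y)) + (1 - h₁) * q * x + (1 - h₂) * x * y - γ * y)
    (Rr Rs hs hr1 hr2 : ℝ)
    (hRr : Rr = βr / γ)
    (hRs : Rs = βs / (α + γ + q * (1 - h₁)))
    (hhs : hs = (1 - h₂) / (α + γ + q * (1 - h₁)))
    (hhr1 : hr1 = (1 - h₁) / γ)
    (hhr2 : hr2 = (1 - h₂) / γ)
    (hRsgt : 1 < Rs) (hRrlt : Rr * (hs + 1) < hs + Rs)
    (a₂ a₁ a₀ ystar xstar : ℝ)
    (ha₂ : a₂ = hr2 * (Rs + hs) - hs * Rr)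
    (ha₁ : a₁ = hr2 * (Rs - 1) - hr1 * q * (Rs + hs) + Rr - Rs)
    (ha₀ : a₀ = hr1 * q * (Rs - 1))
    (hystar : ystar = (a₁ + Real.sqrt (a₁ ^ 2 + 4 * a₂ * a₀)) / (2 * a₂))
    (hxstar : xstar = (Rs - 1) / Rs - ((Rs + hs) / Rs) * ystar) :
    0 < xstar ∧ 0 < ystar ∧ xstar + ystar < 1 ∧
    f₁ xstar ystar = 0 ∧ f₂ xstar ystar = 0 := by
  obtain ⟨hh₁0, hh₁1⟩ := hh₁
  obtain ⟨hh₂0, hh₂1⟩ := hh₂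
  obtain ⟨D, hD_def⟩ : ∃ D : ℝ, D = α + γ + q * (1 - h₁) := ⟨_, rfl⟩
  rw [← hD_def] at hRs hhs
  have hm : 0 < 1 - h₂ := by linarith
  have hp : 0 < 1 - h₁ := by linarith
  have hD : 0 < D := by
    have := mul_pos hq hp
    rw [hD_def]; linarith
  have hDne : D ≠ 0 := ne_of_gt hD
  have hγne : γ ≠ 0 := ne_of_gt hγ
  have hRs0 : 0 < Rs := by linarith
  have hRsne : Rs ≠ 0 := ne_of_gt hRs0
  have hRs1 : 0 < Rs - 1 := by linarith
  have e1 : βs = Rs * D := by rw [hRs]; field_simp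
  have e2 : (1 - h₂) = hs * D := by rw [hhs]; field_simp
  have e3 : βr = Rr * γ := by rw [hRr]; field_simp
  have e4 : (1 - h₁) = hr1 * γ := by rw [hhr1]; field_simp
  have e5 : (1 - h₂) = hr2 * γ := by rw [hhr2]; field_simp
  have hhs0 : 0 < hs := by rw [hhs]; positivity
  have hhr10 : 0 < hr1 := by rw [hhr1]; positivity
  have exA : Rs * xstar = (Rs - 1) - (Rs + hs) * ystar := by
    rw [hxstar]; field_simp
  -- positivity of a₂ and a₀
  have ha₂eq : a₂ = (1 - h₂) * (βs + (1 - h₂) - βr) / (γ * D) := by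
    rw [ha₂, hhr2, hRs, hhs, hRr]; field_simp
  have ha₂pos : 0 < a₂ := by
    rw [ha₂eq]
    exact div_pos (mul_pos hm (by linarith)) (mul_pos hγ hD)
  have ha₂ne : a₂ ≠ 0 := ne_of_gt ha₂pos
  have ha₀pos : 0 < a₀ := by
    rw [ha₀]; exact mul_pos (mul_pos hhr10 hq) (by linarith)
  -- the square root
  obtain ⟨s, hs_def⟩ : ∃ s : ℝ, s = Real.sqrt (a₁ ^ 2 + 4 * a₂ * a₀) := ⟨_, rfl⟩
  rw [← hs_def] at hystar
  have hdisc : 0 ≤ a₁ ^ 2 + 4 * a₂ * a₀ := by positivity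
  have hs2 : s ^ 2 = a₁ ^ 2 + 4 * a₂ * a₀ := by rw [hs_def]; exact Real.sq_sqrt hdisc
  have hsnn : 0 ≤ s := by rw [hs_def]; exact Real.sqrt_nonneg _
  have h2a : ystar * (2 * a₂) = a₁ + s := by
    rw [hystar]; field_simp
  -- key positivity from the hypothesis hRrlt
  have hcond : 0 < γ * (βs + (1 - h₂)) - βr * ((1 - h₂) + D) := by
    have heq : γ * (βs + (1 - h₂)) - βr * ((1 - h₂) + D)
        = γ * D * (hs + Rs - Rr * (hs + 1)) := by
      rw [hRs, hhs, hRr]; field_simp; ring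
    rw [heq]
    exact mul_pos (mul_pos hγ hD) (by linarith)
  have hβsD : D < βs := by
    calc D = D * 1 := by ring
      _ < D * Rs := (mul_lt_mul_iff_right₀ hD).mpr hRsgt
      _ = Rs * D := by ring
      _ = βs := e1.symm
  have hPeq : a₂ * (Rs - 1) ^ 2 - a₁ * (Rs - 1) * (Rs + hs) - a₀ * (Rs + hs) ^ 2
      = (βs - D) * βs * (γ * (βs + (1 - h₂)) - βr * ((1 - h₂) + D)) / (γ * D ^ 3) := by
    rw [ha₂, ha₁, ha₀, hhr1, hhr2, hRs, hhs, hRr]; field_simp; ring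
  have hP : 0 < a₂ * (Rs - 1) ^ 2 - a₁ * (Rs - 1) * (Rs + hs) - a₀ * (Rs + hs) ^ 2 := by
    rw [hPeq]
    exact div_pos (mul_pos (mul_pos (by linarith) hβs) hcond) (by positivity)
  obtain ⟨hypos, hylt⟩ := quad_root_bounds a₂ a₁ a₀ (Rs - 1) (Rs + hs) ystar s
    ha₂pos ha₀pos hs2 hsnn h2a hRs1 (by linarith) (by linarith [hP])
  -- the quadratic identity
  have hQ : a₂ * ystar ^ 2 - a₁ * ystar - a₀ = 0 := by
    have h4 : a₂ * (a₂ * ystar ^ 2 - a₁ * ystar - a₀) = 0 := by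
      linear_combination ((2 * a₂ * ystar - a₁ + s) / 4) * h2a + hs2 / 4
    exact (mul_eq_zero.mp h4).resolve_left ha₂ne
  have hxpos : 0 < xstar := by
    have h0 : 0 < Rs * xstar := by rw [exA]; linarith
    have hx : xstar = (Rs * xstar) / Rs := by field_simp
    rw [hx]; exact div_pos h0 hRs0
  have hsum : xstar + ystar < 1 := by
    have h1 : Rs * (xstar + ystar) = (Rs - 1) - hs * ystar := by
      rw [mul_add, exA]; ring
    have h2 : Rs * (xstar + ystar) < Rs * 1 := by
      rw [mul_one, h1]
      have := mul_pos hhs0 hypos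
      linarith
    exact lt_of_mul_lt_mul_left h2 hRs0.le
  refine ⟨hxpos, hypos, hsum, ?_, ?_⟩
  · rw [hf₁]
    linear_combination xstar * (1 - (xstar + ystar)) * e1 - xstar * ystar * e2
      + xstar * hD_def - D * xstar * exA
  · rw [hf₂]
    have key : Rs * (βr * ystar * (1 - (xstar + ystar)) + (1 - h₁) * q * xstar
        + (1 - h₂) * xstar * ystar - γ * ystar)
        = -γ * (a₂ * ystar ^ 2 - a₁ * ystar - a₀) := by
      linear_combination ((1 - h₁) * q + (1 - h₂) * ystar - βr * ystar) * exA
        + ystar * (1 + hs * ystar) * e3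
        + q * ((Rs - 1) - (Rs + hs) * ystar) * e4
        + ystar * ((Rs - 1) - (Rs + hs) * ystar) * e5
        + γ * ystar ^ 2 * ha₂ - γ * ystar * ha₁ - γ * ha₀
    have h0 : Rs * (βr * ystar * (1 - (xstar + ystar)) + (1 - h₁) * q * xstar
        + (1 - h₂) * xstar * ystar - γ * ystar) = 0 := by
      rw [key, hQ]; ring
    exact (mul_eq_zero.mp h0).resolve_left hRsne
end

section
/- Assume γ > 0, h_s > 0, h_{r2} > 0 and R_r > 0. The Jacobian matrix at P₁ = (0, (R_r-1)/R_r), namely J(P₁) = [[(γ·h_{r2}/h_s)·(R_s - 1 - (R_s + h_s)·(R_r - 1)/R_r), 0], [γ·(h_{r1}·q + (h_{r2} - R_r)·(R_r - 1)/R_r), -γ·(R_r - 1)]], is lower triangular with eigenvalues λ₁ = (γ·h_{r2}/h_s)·(R_s - 1 - (R_s + h_s)·(R_r - 1)/R_r) and λ₂ = -γ·(R_r - 1). If R_r > 1, R_s + h_s > 0, and R_r > (R_s + h_s)/(1 + h_s), then λ₁ < 0 and λ₂ < 0. -/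
/-- The Jacobian at P₁ = (0,(R_r-1)/R_r) is lower triangular with
eigenvalues λ₁ = (γ·h_{r2}/h_s)(R_s - 1 - (R_s+h_s)(R_r-1)/R_r) and λ₂ = -γ(R_r-1);
if R_r > 1, R_s + h_s > 0 and R_r > (R_s+h_s)/(1+h_s), then both are negative. -/
theorem jacobian_P1_eigenvalues
    (Rs Rr hs hr1 hr2 γ q : ℝ)
    (hγ : 0 < γ) (hhs : 0 < hs) (hhr2 : 0 < hr2) (hRr0 : 0 < Rr)
    (J : Matrix (Fin 2) (Fin 2) ℝ)
    (hJ : J = !![γ * hr2 / hs * (Rs - 1 - (Rs + hs) * (Rr - 1) / Rr), 0;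
                 γ * (hr1 * q + (hr2 - Rr) * (Rr - 1) / Rr), -γ * (Rr - 1)])
    (l₁ l₂ : ℝ)
    (hl₁ : l₁ = γ * hr2 / hs * (Rs - 1 - (Rs + hs) * (Rr - 1) / Rr))
    (hl₂ : l₂ = -γ * (Rr - 1)) :
    J 0 1 = 0 ∧
    (∀ l : ℝ, (J - l • (1 : Matrix (Fin 2) (Fin 2) ℝ)).det = 0 ↔ l = l₁ ∨ l = l₂) ∧
    (1 < Rr → 0 < Rs + hs → (Rs + hs) / (1 + hs) < Rr → l₁ < 0 ∧ l₂ < 0) := by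
  subst hJ hl₁ hl₂
  refine ⟨by simp, ?_, ?_⟩
  · intro l
    have hdet : (!![γ * hr2 / hs * (Rs - 1 - (Rs + hs) * (Rr - 1) / Rr), 0;
                 γ * (hr1 * q + (hr2 - Rr) * (Rr - 1) / Rr), -γ * (Rr - 1)]
        - l • (1 : Matrix (Fin 2) (Fin 2) ℝ)).det
        = (γ * hr2 / hs * (Rs - 1 - (Rs + hs) * (Rr - 1) / Rr) - l)
          * (-γ * (Rr - 1) - l) := by
      simp [Matrix.det_fin_two, Matrix.one_apply]
    rw [hdet, mul_eq_zero, sub_eq_zero, sub_eq_zero]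
    constructor <;> rintro (h | h) <;> simp [h]
  · intro h1 h2 h3
    constructor
    · have hpos : 0 < γ * hr2 / hs := by positivity
      have h3' : Rs + hs < Rr * (1 + hs) :=
        (div_lt_iff₀ (by linarith : (0:ℝ) < 1 + hs)).mp h3
      have hnum : Rs - 1 - (Rs + hs) * (Rr - 1) / Rr < 0 := by
        have heq : Rs - 1 - (Rs + hs) * (Rr - 1) / Rr
            = (Rs + hs - Rr * (1 + hs)) / Rr := by
          field_simp
          ring
        rw [heq]
        exact div_neg_of_neg_of_pos (by linarith) hRr0
      calc γ * hr2 / hs * (Rs - 1 - (Rs + hs) * (Rr - 1) / Rr) < γ * hr2 / hs * 0 :=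
            by exact mul_lt_mul_of_pos_left hnum hpos
        _ = 0 := by ring
    · nlinarith
end

section
/- Let x* > 0 and y* > 0 and assume γ > 0, h_s > 0, h_{r2} > 0, h_{r1} ≥ 0, q > 0, R_s > 0, R_r ≥ 0 and a₂ := h_{r2}·(R_s + h_s) - h_s·R_r > 0. Consider the matrix J(P*) = [[-(γ·h_{r2}/h_s)·R_s·x*, -(γ·h_{r2}/h_s)·(R_s + h_s)·x*], [γ·(h_{r1}·q + (h_{r2} - R_r)·y*), -γ·(h_{r1}·q·(x*/y*) + R_r·y*)]]. Then its trace τ = -(γ·h_{r2}/h_s)·R_s·x* - γ·(h_{r1}·q·(x*/y*) + R_r·y*) is strictly negative, and its determinant equals (γ²·h_{r2}/h_s)·x*·(R_s·h_{r1}·q·(x*/y*) + (R_s + h_s)·h_{r1}·q + a₂·y*), which is strictly positive when h_{r1} > 0. -/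
/-- Trace and determinant of the simplified Jacobian at the coexistence
equilibrium: the trace is strictly negative, and the determinant equals
(γ²·h_{r2}/h_s)·x*·(R_s·h_{r1}·q·(x*/y*) + (R_s+h_s)·h_{r1}·q + a₂·y*), which is
strictly positive when h_{r1} > 0. -/
theorem jacobian_coexistence_trace_det
    (Rs Rr hs hr1 hr2 γ q : ℝ)
    (xstar ystar : ℝ) (hx : 0 < xstar) (hy : 0 < ystar)
    (hγ : 0 < γ) (hhs : 0 < hs) (hhr2 : 0 < hr2) (hhr1 : 0 ≤ hr1) (hq : 0 < q)
    (hRs : 0 < Rs) (hRr : 0 ≤ Rr)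
    (a₂ : ℝ) (ha₂ : a₂ = hr2 * (Rs + hs) - hs * Rr) (ha₂pos : 0 < a₂)
    (J : Matrix (Fin 2) (Fin 2) ℝ)
    (hJ : J = !![-(γ * hr2 / hs) * Rs * xstar, -(γ * hr2 / hs) * (Rs + hs) * xstar;
                 γ * (hr1 * q + (hr2 - Rr) * ystar),
                 -γ * (hr1 * q * (xstar / ystar) + Rr * ystar)])
    (τ : ℝ)
    (hτ : τ = -(γ * hr2 / hs) * Rs * xstar - γ * (hr1 * q * (xstar / ystar) + Rr * ystar)) :
    J.trace = τ ∧ τ < 0 ∧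
    J.det = (γ ^ 2 * hr2 / hs) * xstar *
      (Rs * hr1 * q * (xstar / ystar) + (Rs + hs) * hr1 * q + a₂ * ystar) ∧
    (0 < hr1 → 0 < J.det) := by
  have hdet : J.det = (γ ^ 2 * hr2 / hs) * xstar *
      (Rs * hr1 * q * (xstar / ystar) + (Rs + hs) * hr1 * q + a₂ * ystar) := by
    subst hJ ha₂
    rw [Matrix.det_fin_two_of]
    field_simp
    ring
  refine ⟨?_, ?_, hdet, ?_⟩
  · subst hJ
    rw [Matrix.trace_fin_two_of, hτ]
    ring
  · rw [hτ]
    have h1 : 0 < (γ * hr2 / hs) * Rs * xstar := by positivity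
    have h2 : 0 ≤ γ * (hr1 * q * (xstar / ystar) + Rr * ystar) := by positivity
    linarith
  · intro h
    rw [hdet]
    positivity
end
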